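/- arXiv:0903.3061 — 2 statements merged into one kernel-verified Lean document; each statement's English description precedes it below -/
import Mathlib

section
/- Let d0 > 0 and β > 0, let s ∈ ℝ², and let x1, x2, x3 ∈ ℝ² be three non-collinear points. Define f : ℝ² → ℝ by f(z) = Σ_{i=1}^{3} ( ln( (d0 + ‖z − x_i‖^β) / (d0 + ‖s − x_i‖^β) ) )². Then f(z) = 0 if and only if z = s. -/
open Real

/-!
If the sum of squares vanishes, every term vanishes; since `t ↦ log (d0 + t ^ β)` is injective
on `[0, ∞)`, each sensor `x i` is then equidistant from `z` and `s`. For `z ≠ s` the points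
equidistant from `z` and `s` form their perpendicular bisector, a line in the plane, which cannot
contain three non-collinear sensors.
-/

theorem Real.log_div_eq_zero_iff {a b : ℝ} (ha : 0 < a) (hb : 0 < b) :
    log (a / b) = 0 ↔ a = b := by
  rw [log_div ha.ne' hb.ne', sub_eq_zero]
  exact log_injOn_pos.eq_iff ha hb

theorem Real.log_div_add_rpow_eq_zero_iff {d β a b : ℝ} (hd : 0 < d) (hβ : β ≠ 0)
    (ha : 0 ≤ a) (hb : 0 ≤ b) :
    log ((d + a ^ β) / (d + b ^ β)) = 0 ↔ a = b := by
  rw [log_div_eq_zero_iff (by positivity) (by positivity), add_right_inj, rpow_left_inj ha hb hβ]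

section Plane

variable {V P : Type*} [NormedAddCommGroup V] [InnerProductSpace ℝ V] [MetricSpace P]
  [NormedAddTorsor V P]

theorem AffineSubspace.collinear_perpBisector [Fact (Module.finrank ℝ V = 2)] {p₁ p₂ : P}
    (h : p₁ ≠ p₂) : Collinear ℝ (perpBisector p₁ p₂ : Set P) := by
  have : FiniteDimensional ℝ V := .of_fact_finrank_eq_succ 1
  rw [collinear_iff_finrank_le_one, ← direction_eq_vectorSpan, direction_perpBisector,
    Submodule.finrank_orthogonal_span_singleton (n := 1) (vsub_ne_zero.mpr h.symm)]

theorem eq_of_forall_dist_eq_of_not_collinear [Fact (Module.finrank ℝ V = 2)] {S : Set P}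
    (hS : ¬ Collinear ℝ S) {p₁ p₂ : P} (h : ∀ p ∈ S, dist p p₁ = dist p p₂) : p₁ = p₂ := by
  by_contra hne
  refine hS ((AffineSubspace.collinear_perpBisector hne).subset fun p hp => ?_)
  exact AffineSubspace.mem_perpBisector_iff_dist_eq.mpr (h p hp)

end Plane

/-- Property of non-collinear sensors: the sum of squared log-power mismatches
vanishes exactly at the source. -/
theorem noncollinear_sensors_unique_zero
    (d0 β : ℝ) (hd0 : 0 < d0) (hβ : 0 < β)
    (s : EuclideanSpace ℝ (Fin 2))
    (x : Fin 3 → EuclideanSpace ℝ (Fin 2))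
    (hnc : ¬ Collinear ℝ (Set.range x))
    (z : EuclideanSpace ℝ (Fin 2)) :
    (∑ i, (Real.log ((d0 + ‖z - x i‖ ^ β) / (d0 + ‖s - x i‖ ^ β))) ^ 2) = 0 ↔ z = s := by
  have hterm (i : Fin 3) : log ((d0 + ‖z - x i‖ ^ β) / (d0 + ‖s - x i‖ ^ β)) = 0 ↔
      dist (x i) z = dist (x i) s := by
    rw [log_div_add_rpow_eq_zero_iff hd0 hβ.ne' (norm_nonneg _) (norm_nonneg _),
      dist_comm, dist_eq_norm, dist_comm, dist_eq_norm]
  have : Fact (Module.finrank ℝ (EuclideanSpace ℝ (Fin 2)) = 2) := ⟨finrank_euclideanSpace_fin⟩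
  rw [Finset.sum_eq_zero_iff_of_nonneg fun i _ => sq_nonneg _]
  simp only [Finset.mem_univ, true_imp_iff, sq_eq_zero_iff, hterm]
  refine ⟨fun h => eq_of_forall_dist_eq_of_not_collinear hnc ?_, fun h _ => h ▸ rfl⟩
  rintro _ ⟨i, rfl⟩
  exact h i
end

section
/- Let N ≥ 1, let α > 1, let U ≥ 0 and L ≥ 0, and set η = √(U² + L/(α N)) − U. Let g_1, …, g_N and n_1, …, n_N be real numbers such that |g_i| ≤ U for all i, Σ_{i=1}^{N} g_i² ≥ L, and |n_i| ≤ η for all i. Then Σ_{i=1}^{N} (g_i + n_i)² ≥ ((α − 1)/α) · L. -/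
/-! Each perturbed square loses at most `2 U η` against `g_i ^ 2`, since `|2 g_i n_i| ≤ 2 U η`.
The choice of `η` makes `(U + η) ^ 2 = U ^ 2 + L / (α N)`, so `2 U η ≤ L / (α N)`, and the
total loss over the `N` summands is at most `L / α`. -/

theorem sq_sub_two_mul_mul_le_add_sq {g n U η : ℝ} (hg : |g| ≤ U) (hn : |n| ≤ η) :
    g ^ 2 - 2 * U * η ≤ (g + n) ^ 2 := by
  have hgn : |g * n| ≤ U * η := by
    rw [abs_mul]
    exact mul_le_mul hg hn (abs_nonneg n) ((abs_nonneg g).trans hg)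
  nlinarith [neg_abs_le (g * n), sq_nonneg n]

theorem Finset.sum_sq_sub_card_mul_le_sum_add_sq {ι : Type*} (s : Finset ι) {g n : ι → ℝ}
    {U η : ℝ} (hg : ∀ i ∈ s, |g i| ≤ U) (hn : ∀ i ∈ s, |n i| ≤ η) :
    ∑ i ∈ s, g i ^ 2 - s.card * (2 * U * η) ≤ ∑ i ∈ s, (g i + n i) ^ 2 :=
  calc ∑ i ∈ s, g i ^ 2 - s.card * (2 * U * η) = ∑ i ∈ s, (g i ^ 2 - 2 * U * η) := by
        rw [sum_sub_distrib, sum_const, nsmul_eq_mul]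
    _ ≤ ∑ i ∈ s, (g i + n i) ^ 2 :=
        sum_le_sum fun i hi ↦ sq_sub_two_mul_mul_le_add_sq (hg i hi) (hn i hi)

theorem two_mul_mul_sqrt_sq_add_sub_le (U : ℝ) {c : ℝ} (hc : 0 ≤ c) :
    2 * U * (√(U ^ 2 + c) - U) ≤ c := by
  nlinarith [Real.sq_sqrt (by positivity : 0 ≤ U ^ 2 + c), sq_nonneg (√(U ^ 2 + c) - U)]

theorem perturbed_sum_of_squares_bound_general
    (N : ℕ) (α U L : ℝ) (hα : 1 < α) (hL : 0 ≤ L)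
    (η : ℝ) (hη : η = Real.sqrt (U ^ 2 + L / (α * N)) - U)
    (g n : Fin N → ℝ)
    (hg : ∀ i, |g i| ≤ U)
    (hsum : L ≤ ∑ i, (g i) ^ 2)
    (hn : ∀ i, |n i| ≤ η) :
    ((α - 1) / α) * L ≤ ∑ i, (g i + n i) ^ 2 := by
  have hα0 : 0 < α := zero_lt_one.trans hα
  have hloss : 2 * U * η ≤ L / (α * N) :=
    hη ▸ two_mul_mul_sqrt_sq_add_sub_le U (div_nonneg hL (by positivity))
  have htotal : (N : ℝ) * (2 * U * η) ≤ L / α :=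
    calc (N : ℝ) * (2 * U * η) ≤ N * (L / (α * N)) := by gcongr
      _ = L / α * (N / N) := by ring
      _ ≤ L / α := mul_le_of_le_one_right (div_nonneg hL hα0.le) (div_self_le_one _)
  have hpert := Finset.univ.sum_sq_sub_card_mul_le_sum_add_sq (fun i _ ↦ hg i) (fun i _ ↦ hn i)
  rw [Finset.card_univ, Fintype.card_fin] at hpert
  rw [show (α - 1) / α * L = L - L / α by field_simp]
  linarith

/-- Algebraic perturbation bound for sums of squares (paper's Lemma on the sum bound). -/
theorem perturbed_sum_of_squares_bound
    (N : ℕ) (hN : 1 ≤ N) (α U L : ℝ) (hα : 1 < α) (hU : 0 ≤ U) (hL : 0 ≤ L)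
    (η : ℝ) (hη : η = Real.sqrt (U ^ 2 + L / (α * N)) - U)
    (g n : Fin N → ℝ)
    (hg : ∀ i, |g i| ≤ U)
    (hsum : L ≤ ∑ i, (g i) ^ 2)
    (hn : ∀ i, |n i| ≤ η) :
    ((α - 1) / α) * L ≤ ∑ i, (g i + n i) ^ 2 :=
  perturbed_sum_of_squares_bound_general N α U L hα hL η hη g n hg hsum hn
end
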